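/- arXiv:2506.12049 — 7 statements merged into one kernel-verified Lean document; each statement's English description precedes it below -/
import Mathlib

section
/- Let H be a Hilbert space and let U, V be bounded linear operators on H. Then the range of U is contained in the range of V if and only if there exists λ > 0 such that U U* ≤ λ² V V* (in the sense of positive operators), if and only if U = V W for some bounded linear operator W on H. -/
/-!
Inclusion of ranges gives a factorization: `V` is injective on `(ker V)ᗮ` and has the same range
there, so inverting it on `range U` yields a linear `W` with values in `(ker V)ᗮ` and `U = V W`.
Its graph `{(e, y) | y ∈ (ker V)ᗮ, V y = U e}` is closed, so `W` is bounded by the closed graph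
theorem. A factorization gives the bound, since `U* = W* V*`. Conversely, under the bound, for
`x = U g` the functional `V* f ↦ ⟪x, f⟫` is well defined and bounded on `range V*`; extending it by
Hahn–Banach and representing it by Riesz as `⟪z, ·⟫` gives `V z = x`.
-/

open scoped InnerProductSpace

open ContinuousLinearMap Set

section

variable {𝕜 : Type*} [RCLike 𝕜]

theorem exists_strongDual_comp_eq_of_norm_le {E F : Type*} [AddCommGroup E] [Module 𝕜 E]
    [NormedAddCommGroup F] [NormedSpace 𝕜 F] (A : E →ₗ[𝕜] F) (B : E →ₗ[𝕜] 𝕜) (c : ℝ)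
    (h : ∀ e, ‖B e‖ ≤ c * ‖A e‖) : ∃ g : StrongDual 𝕜 F, ∀ e, g (A e) = B e := by
  have hker : A.ker ≤ B.ker := fun e he ↦ by
    simpa [LinearMap.mem_ker.1 he] using h e
  let φ : A.range →ₗ[𝕜] 𝕜 := A.ker.liftQ B hker ∘ₗ A.quotKerEquivRange.symm.toLinearMap
  have hφ (e : E) : φ ⟨A e, LinearMap.mem_range_self A e⟩ = B e := by
    simp [φ, LinearMap.quotKerEquivRange_symm_apply_image]
  have hφ_le (y : A.range) : ‖φ y‖ ≤ c * ‖y‖ := by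
    obtain ⟨_, e, rfl⟩ := y
    exact (hφ e).symm ▸ h e
  obtain ⟨g, hg, -⟩ := exists_extension_norm_eq _ (φ.mkContinuous c hφ_le)
  exact ⟨g, fun e ↦ (hg _).trans (hφ e)⟩

section Factorization

variable {E F G : Type*} [NormedAddCommGroup F] [NormedSpace 𝕜 F]
  [NormedAddCommGroup G] [InnerProductSpace 𝕜 G]

theorem injOn_orthogonal_ker (V : G →L[𝕜] F) : InjOn V (V : G →ₗ[𝕜] F).kerᗮ :=
  LinearMap.injOn_of_disjoint_ker le_rfl (Submodule.orthogonal_disjoint _).symm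

theorem map_orthogonal_ker [CompleteSpace G] (V : G →L[𝕜] F) :
    (V : G →ₗ[𝕜] F).kerᗮ.map (V : G →ₗ[𝕜] F) = (V : G →ₗ[𝕜] F).range := by
  have : (V : G →ₗ[𝕜] F).ker.HasOrthogonalProjection :=
    have := V.isClosed_ker.completeSpace_coe; inferInstance
  rw [LinearMap.range_eq_map,
    ← Submodule.sup_orthogonal_of_hasOrthogonalProjection (K := (V : G →ₗ[𝕜] F).ker),
    Submodule.map_sup, LinearMap.le_ker_iff_map.1 le_rfl, bot_sup_eq]

theorem exists_linearMap_orthogonal_ker_comp_eq [AddCommGroup E] [Module 𝕜 E] [CompleteSpace G]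
    (U : E →ₗ[𝕜] F) (V : G →L[𝕜] F) (h : U.range ≤ (V : G →ₗ[𝕜] F).range) :
    ∃ W : E →ₗ[𝕜] G, ∀ e, W e ∈ (V : G →ₗ[𝕜] F).kerᗮ ∧ V (W e) = U e := by
  set K := (V : G →ₗ[𝕜] F).kerᗮ
  have hinj : Function.Injective ((V : G →ₗ[𝕜] F).domRestrict K) := fun a b hab ↦
    Subtype.ext (injOn_orthogonal_ker V a.2 b.2 hab)
  have hrange : U.range ≤ ((V : G →ₗ[𝕜] F).domRestrict K).range := by
    rwa [LinearMap.range_domRestrict, map_orthogonal_ker]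
  let e := LinearEquiv.ofInjective _ hinj
  refine ⟨K.subtype ∘ₗ e.symm.toLinearMap ∘ₗ U.codRestrict _ fun x ↦ hrange ⟨x, rfl⟩,
    fun x ↦ ⟨Subtype.prop _, ?_⟩⟩
  exact congrArg Subtype.val (e.apply_symm_apply ⟨U x, _⟩)

theorem exists_eq_comp_of_range_subset [NormedAddCommGroup E] [NormedSpace 𝕜 E]
    [CompleteSpace E] [CompleteSpace G] (U : E →L[𝕜] F) (V : G →L[𝕜] F)
    (h : range U ⊆ range V) : ∃ W : E →L[𝕜] G, U = V ∘L W := by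
  set K := (V : G →ₗ[𝕜] F).kerᗮ
  obtain ⟨W, hW⟩ := exists_linearMap_orthogonal_ker_comp_eq (U : E →ₗ[𝕜] F) V h
  have hgraph : (W.graph : Set (E × G)) = {p | p.2 ∈ K ∧ V p.2 = U p.1} := by
    ext ⟨e, y⟩
    refine ⟨fun hy ↦ ?_, fun ⟨hyK, hVy⟩ ↦ ?_⟩
    · obtain rfl : y = W e := (LinearMap.mem_graph_iff W _).1 hy
      exact hW e
    · exact injOn_orthogonal_ker V hyK (hW e).1 (hVy.trans (hW e).2.symm)
  have hclosed : IsClosed (W.graph : Set (E × G)) := by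
    rw [hgraph]
    exact ((Submodule.isClosed_orthogonal _).preimage continuous_snd).inter
      (isClosed_eq (V.continuous.comp continuous_snd) (U.continuous.comp continuous_fst))
  exact ⟨ofIsClosedGraph hclosed, ext fun e ↦ (hW e).2.symm⟩

end Factorization

section Adjoint

variable {E F G : Type*} [NormedAddCommGroup E] [InnerProductSpace 𝕜 E] [CompleteSpace E]
  [NormedAddCommGroup F] [InnerProductSpace 𝕜 F] [CompleteSpace F]
  [NormedAddCommGroup G] [InnerProductSpace 𝕜 G] [CompleteSpace G]

theorem mem_range_of_norm_inner_le (V : E →L[𝕜] F) (x : F) (c : ℝ)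
    (h : ∀ f, ‖⟪x, f⟫_𝕜‖ ≤ c * ‖adjoint V f‖) : x ∈ range V := by
  obtain ⟨g, hg⟩ := exists_strongDual_comp_eq_of_norm_le (adjoint V).toLinearMap (innerₛₗ 𝕜 x) c h
  refine ⟨(InnerProductSpace.toDual 𝕜 E).symm g, ext_inner_right 𝕜 fun f ↦ ?_⟩
  rw [← adjoint_inner_right, InnerProductSpace.toDual_symm_apply]
  exact hg f

theorem range_subset_range_of_norm_adjoint_le (U : G →L[𝕜] F) (V : E →L[𝕜] F) (l : ℝ)
    (h : ∀ f, ‖adjoint U f‖ ≤ l * ‖adjoint V f‖) : range U ⊆ range V := by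
  rintro _ ⟨g, rfl⟩
  refine mem_range_of_norm_inner_le V (U g) (‖g‖ * l) fun f ↦ ?_
  calc ‖⟪U g, f⟫_𝕜‖ = ‖⟪g, adjoint U f⟫_𝕜‖ := by rw [adjoint_inner_right]
    _ ≤ ‖g‖ * ‖adjoint U f‖ := norm_inner_le_norm _ _
    _ ≤ ‖g‖ * (l * ‖adjoint V f‖) := by gcongr; exact h f
    _ = ‖g‖ * l * ‖adjoint V f‖ := by ring

theorem norm_adjoint_comp_apply_le (V : G →L[𝕜] F) (W : E →L[𝕜] G) (f : F) :
    ‖adjoint (V ∘L W) f‖ ≤ ‖W‖ * ‖adjoint V f‖ := by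
  rw [adjoint_comp, comp_apply, ← LinearIsometryEquiv.norm_map adjoint W]
  exact le_opNorm _ _

end Adjoint

end

/-- Douglas' factorization theorem. -/
theorem douglas_factorization
    {H : Type*} [NormedAddCommGroup H] [InnerProductSpace ℂ H] [CompleteSpace H]
    (U V : H →L[ℂ] H) :
    (Set.range U ⊆ Set.range V ↔
      ∃ l : ℝ, 0 < l ∧ ∀ f : H,
        ‖ContinuousLinearMap.adjoint U f‖ ^ 2 ≤ l ^ 2 * ‖ContinuousLinearMap.adjoint V f‖ ^ 2) ∧
    (Set.range U ⊆ Set.range V ↔ ∃ W : H →L[ℂ] H, U = V.comp W) := by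
  have hfactor : range U ⊆ range V ↔ ∃ W : H →L[ℂ] H, U = V.comp W :=
    ⟨exists_eq_comp_of_range_subset U V, by rintro ⟨W, rfl⟩; exact range_comp_subset_range W V⟩
  have hsq {l : ℝ} (hl : 0 < l) (f : H) :
      ‖adjoint U f‖ ^ 2 ≤ l ^ 2 * ‖adjoint V f‖ ^ 2 ↔ ‖adjoint U f‖ ≤ l * ‖adjoint V f‖ := by
    rw [← mul_pow]
    exact pow_le_pow_iff_left₀ (norm_nonneg _) (by positivity) two_ne_zero
  refine ⟨⟨fun h ↦ ?_, fun ⟨l, hl, hUV⟩ ↦ ?_⟩, hfactor⟩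
  · obtain ⟨W, rfl⟩ := hfactor.1 h
    refine ⟨‖W‖ + 1, by positivity, fun f ↦ (hsq (by positivity) f).2 ?_⟩
    exact (norm_adjoint_comp_apply_le V W f).trans (by gcongr; linarith)
  · exact range_subset_range_of_norm_adjoint_le U V l fun f ↦ (hsq hl f).1 (hUV f)
end

section
/- Let H be a Hilbert space and K a bounded linear operator on H with closed range. If {f_i} is a K-frame for H with bounds A, B, then {f_i} is an ordinary frame for the closed subspace R(K) (the range of K), with bounds A/‖K†‖² and B, where K† is the pseudo-inverse of K. -/
open scoped ComplexInnerProductSpace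

/-- If `K` has closed range with pseudo-inverse `K†`, every `K`-frame for `H`
with bounds `A, B` is an ordinary frame for the range of `K`, with bounds
`A / ‖K†‖²` and `B`. -/
theorem K_frame_is_frame_on_range
    {H : Type*} [NormedAddCommGroup H] [InnerProductSpace ℂ H] [CompleteSpace H]
    (K : H →L[ℂ] H) (hclosed : IsClosed (Set.range K))
    (Kd : H →L[ℂ] H) (hKd : ∀ x ∈ Set.range K, K (Kd x) = x)
    (f : ℕ → H) (A B : ℝ) (hA : 0 < A) (hAB : A ≤ B)
    (hKframe : ∀ g : H, A * ‖ContinuousLinearMap.adjoint K g‖ ^ 2 ≤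
        ∑' i, ‖⟪g, f i⟫‖ ^ 2 ∧
      ∑' i, ‖⟪g, f i⟫‖ ^ 2 ≤ B * ‖g‖ ^ 2) :
    ∀ g ∈ Set.range K, (A / ‖Kd‖ ^ 2) * ‖g‖ ^ 2 ≤ ∑' i, ‖⟪g, f i⟫‖ ^ 2 ∧
      ∑' i, ‖⟪g, f i⟫‖ ^ 2 ≤ B * ‖g‖ ^ 2 := by
  intro g hg
  obtain ⟨hlow, hup⟩ := hKframe g
  refine ⟨?_, hup⟩
  by_cases hg0 : g = 0
  · have : (0:ℝ) ≤ ∑' i, ‖⟪g, f i⟫‖ ^ 2 := tsum_nonneg fun i => by positivity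
    simp only [hg0, norm_zero] at *; simpa using this
  have hKd0 : Kd ≠ 0 := by
    intro h
    apply hg0
    rw [← hKd g hg, h]
    simp
  have hKdn : 0 < ‖Kd‖ := norm_pos_iff.mpr hKd0
  have h1 : ‖g‖ ^ 2 = ‖(⟪Kd g, ContinuousLinearMap.adjoint K g⟫ : ℂ)‖ := by
    rw [ContinuousLinearMap.adjoint_inner_right, hKd g hg]
    rw [inner_self_eq_norm_sq_to_K (𝕜 := ℂ) g]
    simp [sq_abs]
  have h2 : ‖(⟪Kd g, ContinuousLinearMap.adjoint K g⟫ : ℂ)‖ ≤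
      ‖Kd g‖ * ‖ContinuousLinearMap.adjoint K g‖ := norm_inner_le_norm _ _
  have h3 : ‖Kd g‖ ≤ ‖Kd‖ * ‖g‖ := Kd.le_opNorm g
  have key : ‖g‖ ≤ ‖Kd‖ * ‖ContinuousLinearMap.adjoint K g‖ := by
    have hgpos : 0 < ‖g‖ := norm_pos_iff.mpr hg0
    nlinarith [norm_nonneg (ContinuousLinearMap.adjoint K g)]
  have hsq : ‖g‖ ^ 2 ≤ ‖Kd‖ ^ 2 * ‖ContinuousLinearMap.adjoint K g‖ ^ 2 := by
    nlinarith [norm_nonneg g, norm_nonneg (ContinuousLinearMap.adjoint K g)]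
  calc (A / ‖Kd‖ ^ 2) * ‖g‖ ^ 2
      ≤ (A / ‖Kd‖ ^ 2) * (‖Kd‖ ^ 2 * ‖ContinuousLinearMap.adjoint K g‖ ^ 2) := by
        apply mul_le_mul_of_nonneg_left hsq (by positivity)
    _ = A * ‖ContinuousLinearMap.adjoint K g‖ ^ 2 := by
        field_simp
    _ ≤ ∑' i, ‖⟪g, f i⟫‖ ^ 2 := hlow
end

section
/- Let {f_i} and {g_i} be Bessel sequences in a Hilbert space H with synthesis operators T and T' respectively (T{β_i} = Σ β_i f_i), and Bessel bounds C and D. If T (T')* = K for some bounded operator K on H, then {f_i} is a K-frame for H with lower bound 1/D; and if T' T* = K, then {g_i} is a K-frame for H with lower bound 1/C. -/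
open scoped ComplexInnerProductSpace ENNReal

lemma synth_adjoint_coord
    {H : Type*} [NormedAddCommGroup H] [InnerProductSpace ℂ H] [CompleteSpace H]
    (f : ℕ → H) (T : (lp (fun _ : ℕ => ℂ) 2) →L[ℂ] H)
    (hT : ∀ β : lp (fun _ : ℕ => ℂ) 2, T β = ∑' i, β i • f i)
    (h : H) (i : ℕ) :
    (ContinuousLinearMap.adjoint T h) i = ⟪f i, h⟫ := by
  have h1 : ⟪lp.single 2 i (1 : ℂ), ContinuousLinearMap.adjoint T h⟫ =
      (ContinuousLinearMap.adjoint T h) i := by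
    rw [lp.inner_single_left]
    simp [RCLike.inner_apply]
  have h2 : T (lp.single 2 i (1 : ℂ)) = f i := by
    rw [hT, tsum_eq_single i]
    · simp [lp.single_apply_self]
    · intro j hj
      rw [lp.single_apply_ne 2 i _ hj, zero_smul]
  rw [← h1, ContinuousLinearMap.adjoint_inner_right, h2]

lemma synth_adjoint_norm_sq
    {H : Type*} [NormedAddCommGroup H] [InnerProductSpace ℂ H] [CompleteSpace H]
    (f : ℕ → H) (T : (lp (fun _ : ℕ => ℂ) 2) →L[ℂ] H)
    (hT : ∀ β : lp (fun _ : ℕ => ℂ) 2, T β = ∑' i, β i • f i)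
    (h : H) :
    ‖ContinuousLinearMap.adjoint T h‖ ^ 2 = ∑' i, ‖⟪h, f i⟫‖ ^ 2 := by
  have key := lp.norm_rpow_eq_tsum (by norm_num)
    (ContinuousLinearMap.adjoint T h)
  have h2 : (2 : ℝ≥0∞).toReal = (2 : ℝ) := by norm_num
  rw [h2] at key
  calc ‖ContinuousLinearMap.adjoint T h‖ ^ 2
      = ‖ContinuousLinearMap.adjoint T h‖ ^ (2 : ℝ) := by
        rw [← Real.rpow_natCast]; norm_num
    _ = ∑' i, ‖(ContinuousLinearMap.adjoint T h) i‖ ^ (2 : ℝ) := key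
    _ = ∑' i, ‖⟪h, f i⟫‖ ^ 2 := by
        congr 1; funext i
        rw [synth_adjoint_coord f T hT, ← norm_inner_symm, ← Real.rpow_natCast]
        norm_num

lemma synth_K_frame_aux
    {H : Type*} [NormedAddCommGroup H] [InnerProductSpace ℂ H] [CompleteSpace H]
    (f g : ℕ → H) (D : ℝ) (hD : 0 < D)
    (hBg : ∀ h : H, ∑' i, ‖⟪h, g i⟫‖ ^ 2 ≤ D * ‖h‖ ^ 2)
    (T T' : (lp (fun _ : ℕ => ℂ) 2) →L[ℂ] H)
    (hT : ∀ β : lp (fun _ : ℕ => ℂ) 2, T β = ∑' i, β i • f i)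
    (hT' : ∀ β : lp (fun _ : ℕ => ℂ) 2, T' β = ∑' i, β i • g i)
    (K : H →L[ℂ] H) (hK : T.comp (ContinuousLinearMap.adjoint T') = K) (h : H) :
    (1 / D) * ‖ContinuousLinearMap.adjoint K h‖ ^ 2 ≤ ∑' i, ‖⟪h, f i⟫‖ ^ 2 := by
  have hT'adj : ∀ x : H, ‖ContinuousLinearMap.adjoint T' x‖ ≤ Real.sqrt D * ‖x‖ := by
    intro x
    have h1 : ‖ContinuousLinearMap.adjoint T' x‖ ^ 2 ≤ D * ‖x‖ ^ 2 := by
      rw [synth_adjoint_norm_sq g T' hT']; exact hBg x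
    have := Real.sqrt_le_sqrt h1
    rwa [Real.sqrt_sq (norm_nonneg _), show D * ‖x‖ ^ 2 = (Real.sqrt D * ‖x‖) ^ 2 by
      rw [mul_pow, Real.sq_sqrt hD.le], Real.sqrt_sq
      (by positivity)] at this
  have hT'norm : ‖T'‖ ≤ Real.sqrt D := by
    rw [← (ContinuousLinearMap.adjoint (𝕜 := ℂ)).norm_map T']
    exact ContinuousLinearMap.opNorm_le_bound _ (Real.sqrt_nonneg D) hT'adj
  have hKadj : ContinuousLinearMap.adjoint K = T'.comp (ContinuousLinearMap.adjoint T) := by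
    rw [← hK, ContinuousLinearMap.adjoint_comp, ContinuousLinearMap.adjoint_adjoint]
  have hbound : ‖ContinuousLinearMap.adjoint K h‖ ≤
      Real.sqrt D * ‖ContinuousLinearMap.adjoint T h‖ := by
    rw [hKadj]
    calc ‖T' (ContinuousLinearMap.adjoint T h)‖
        ≤ ‖T'‖ * ‖ContinuousLinearMap.adjoint T h‖ := T'.le_opNorm _
      _ ≤ Real.sqrt D * ‖ContinuousLinearMap.adjoint T h‖ :=
          mul_le_mul_of_nonneg_right hT'norm (norm_nonneg _)
  have hsq : ‖ContinuousLinearMap.adjoint K h‖ ^ 2 ≤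
      D * ‖ContinuousLinearMap.adjoint T h‖ ^ 2 := by
    have := pow_le_pow_left₀ (norm_nonneg _) hbound 2
    rwa [mul_pow, Real.sq_sqrt hD.le] at this
  rw [← synth_adjoint_norm_sq f T hT h]
  rw [div_mul_eq_mul_div, one_mul, div_le_iff₀ hD, mul_comm]
  exact hsq

/-- If `{f_i}` and `{g_i}` are Bessel sequences with synthesis operators `T`,
`T'` and Bessel bounds `C`, `D`, then `T (T')* = K` implies `{f_i}` is a
`K`-frame with lower bound `1/D`, and `T' T* = K` implies `{g_i}` is a
`K`-frame with lower bound `1/C`. -/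
theorem bessel_synthesis_K_frame
    {H : Type*} [NormedAddCommGroup H] [InnerProductSpace ℂ H] [CompleteSpace H]
    (f g : ℕ → H) (C D : ℝ) (hC : 0 < C) (hD : 0 < D)
    (hBf : ∀ h : H, ∑' i, ‖⟪h, f i⟫‖ ^ 2 ≤ C * ‖h‖ ^ 2)
    (hBg : ∀ h : H, ∑' i, ‖⟪h, g i⟫‖ ^ 2 ≤ D * ‖h‖ ^ 2)
    (T T' : (lp (fun _ : ℕ => ℂ) 2) →L[ℂ] H)
    (hT : ∀ β : lp (fun _ : ℕ => ℂ) 2, T β = ∑' i, β i • f i)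
    (hT' : ∀ β : lp (fun _ : ℕ => ℂ) 2, T' β = ∑' i, β i • g i)
    (K : H →L[ℂ] H) :
    (T.comp (ContinuousLinearMap.adjoint T') = K →
      ∀ h : H, (1 / D) * ‖ContinuousLinearMap.adjoint K h‖ ^ 2 ≤
        ∑' i, ‖⟪h, f i⟫‖ ^ 2) ∧
    (T'.comp (ContinuousLinearMap.adjoint T) = K →
      ∀ h : H, (1 / C) * ‖ContinuousLinearMap.adjoint K h‖ ^ 2 ≤
        ∑' i, ‖⟪h, g i⟫‖ ^ 2) := by
  constructor
  · exact fun hK h => synth_K_frame_aux f g D hD hBg T T' hT hT' K hK h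
  · exact fun hK h => synth_K_frame_aux g f C hC hBf T' T hT' hT K hK h
end

section
/- Let {f_i} be a K-frame for a Hilbert space H with bounds A, B, and let T be a bounded linear operator on H whose range is contained in the range of K. Then {f_i} is a T-frame for H: there exists λ > 0 with (A/λ²)‖T* f‖² ≤ Σ_{i=1}^∞ |⟨f, f_i⟩|² ≤ B‖f‖² for all f ∈ H. -/
open scoped ComplexInnerProductSpace

/-!
Douglas' factorization: if `R(T) ⊆ R(K)`, then `T = K C` for a bounded `C`, obtained by inverting
the injective restriction of `K` to `(ker K)ᗮ` on `R(T)`; `C` is bounded by the closed graph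
theorem. Then `T* = C* K*`, so `‖T* g‖ ≤ λ ‖K* g‖` with `λ = ‖C*‖ + 1`, and the lower `K`-frame
bound `A ‖K* g‖² ≤ ∑ |⟨g, f i⟩|²` becomes the lower `T`-frame bound with constant `A / λ²`.
-/

namespace ContinuousLinearMap

theorem exists_comp_eq_of_injective_of_range_subset {𝕜 E F G : Type*} [NontriviallyNormedField 𝕜]
    [NormedAddCommGroup E] [NormedSpace 𝕜 E] [CompleteSpace E]
    [NormedAddCommGroup F] [NormedSpace 𝕜 F] [CompleteSpace F]
    [NormedAddCommGroup G] [NormedSpace 𝕜 G]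
    (K : F →L[𝕜] G) (hK : Function.Injective K) (T : E →L[𝕜] G)
    (hrange : Set.range T ⊆ Set.range K) :
    ∃ C : E →L[𝕜] F, K ∘L C = T := by
  let C : E →ₗ[𝕜] F := (LinearEquiv.ofInjective (K : F →ₗ[𝕜] G) hK).symm.toLinearMap ∘ₗ
    (T : E →ₗ[𝕜] G).codRestrict _ fun x => hrange ⟨x, rfl⟩
  have hKC : ∀ x, K (C x) = T x := fun x =>
    LinearEquiv.ofInjective_symm_apply (K : F →ₗ[𝕜] G) (h := hK) _
  have hgraph : (C.graph : Set (E × F)) = {p | K p.2 = T p.1} := by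
    ext ⟨x, y⟩
    simp only [LinearMap.mem_graph_iff, SetLike.mem_coe, Set.mem_ofPred_eq, ← hKC x]
    exact ⟨fun h => h ▸ rfl, fun h => hK h⟩
  have hclosed : IsClosed (C.graph : Set (E × F)) := by
    rw [hgraph]
    exact isClosed_eq (K.continuous.comp continuous_snd) (T.continuous.comp continuous_fst)
  exact ⟨ofIsClosedGraph hclosed, ext hKC⟩

variable {𝕜 E F : Type*} [RCLike 𝕜]
    [NormedAddCommGroup E] [InnerProductSpace 𝕜 E]
    [NormedAddCommGroup F] [InnerProductSpace 𝕜 F]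

theorem injective_comp_subtypeL_orthogonal_ker (K : E →L[𝕜] F) :
    Function.Injective (K ∘L K.kerᗮ.subtypeL) := by
  refine (injective_iff_map_eq_zero _).2 fun y hy => ?_
  have hker : (y : E) ∈ K.ker := hy
  simpa using Submodule.disjoint_def.1 K.ker.orthogonal_disjoint _ hker y.2

variable [CompleteSpace E]

theorem range_comp_subtypeL_orthogonal_ker (K : E →L[𝕜] F) :
    Set.range (K ∘L K.kerᗮ.subtypeL) = Set.range K := by
  refine Set.Subset.antisymm (fun _ ⟨y, hy⟩ => ⟨y, hy⟩) ?_
  rintro _ ⟨x, rfl⟩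
  have hproj : K (K.ker.starProjection x) = 0 := K.ker.starProjection_apply_mem x
  exact ⟨⟨_, K.ker.sub_starProjection_mem_orthogonal x⟩, by simp [hproj]⟩

theorem exists_comp_eq_of_range_subset {D : Type*} [NormedAddCommGroup D] [NormedSpace 𝕜 D]
    [CompleteSpace D] (K : E →L[𝕜] F) (T : D →L[𝕜] F) (hrange : Set.range T ⊆ Set.range K) :
    ∃ C : D →L[𝕜] E, K ∘L C = T := by
  obtain ⟨C, hC⟩ := exists_comp_eq_of_injective_of_range_subset _
    (injective_comp_subtypeL_orthogonal_ker K) T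
    (hrange.trans (range_comp_subtypeL_orthogonal_ker K).ge)
  exact ⟨K.kerᗮ.subtypeL ∘L C, by rw [← hC, comp_assoc]⟩

theorem exists_norm_adjoint_le_of_range_subset [CompleteSpace F] {D : Type*} [NormedAddCommGroup D]
    [InnerProductSpace 𝕜 D] [CompleteSpace D] (K : E →L[𝕜] F) (T : D →L[𝕜] F)
    (hrange : Set.range T ⊆ Set.range K) :
    ∃ l : ℝ, 0 < l ∧ ∀ g, ‖adjoint T g‖ ≤ l * ‖adjoint K g‖ := by
  obtain ⟨C, rfl⟩ := exists_comp_eq_of_range_subset K T hrange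
  refine ⟨‖adjoint C‖ + 1, by positivity, fun g => ?_⟩
  rw [adjoint_comp, comp_apply]
  exact (le_opNorm _ _).trans (by gcongr; linarith)

end ContinuousLinearMap

theorem K_frame_range_inclusion_general
    {H : Type*} [NormedAddCommGroup H] [InnerProductSpace ℂ H] [CompleteSpace H]
    (K T : H →L[ℂ] H) (f : ℕ → H) (A B : ℝ) (hA : 0 < A)
    (hKframe : ∀ g : H, A * ‖ContinuousLinearMap.adjoint K g‖ ^ 2 ≤
        ∑' i, ‖⟪g, f i⟫‖ ^ 2 ∧ ∑' i, ‖⟪g, f i⟫‖ ^ 2 ≤ B * ‖g‖ ^ 2)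
    (hrange : Set.range T ⊆ Set.range K) :
    ∃ l : ℝ, 0 < l ∧ ∀ g : H,
      (A / l ^ 2) * ‖ContinuousLinearMap.adjoint T g‖ ^ 2 ≤
        ∑' i, ‖⟪g, f i⟫‖ ^ 2 ∧
      ∑' i, ‖⟪g, f i⟫‖ ^ 2 ≤ B * ‖g‖ ^ 2 := by
  obtain ⟨l, hl, hTK⟩ := K.exists_norm_adjoint_le_of_range_subset T hrange
  refine ⟨l, hl, fun g => ⟨?_, (hKframe g).2⟩⟩
  calc A / l ^ 2 * ‖ContinuousLinearMap.adjoint T g‖ ^ 2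
      ≤ A / l ^ 2 * (l * ‖ContinuousLinearMap.adjoint K g‖) ^ 2 := by gcongr; exact hTK g
    _ = A * ‖ContinuousLinearMap.adjoint K g‖ ^ 2 := by field_simp
    _ ≤ ∑' i, ‖⟪g, f i⟫‖ ^ 2 := (hKframe g).1

/-- If `{f_i}` is a `K`-frame and `T` is a bounded operator with
`R(T) ⊆ R(K)`, then `{f_i}` is a `T`-frame. -/
theorem K_frame_range_inclusion
    {H : Type*} [NormedAddCommGroup H] [InnerProductSpace ℂ H] [CompleteSpace H]
    (K T : H →L[ℂ] H) (f : ℕ → H) (A B : ℝ) (hA : 0 < A) (hAB : A ≤ B)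
    (hKframe : ∀ g : H, A * ‖ContinuousLinearMap.adjoint K g‖ ^ 2 ≤
        ∑' i, ‖⟪g, f i⟫‖ ^ 2 ∧ ∑' i, ‖⟪g, f i⟫‖ ^ 2 ≤ B * ‖g‖ ^ 2)
    (hrange : Set.range T ⊆ Set.range K) :
    ∃ l : ℝ, 0 < l ∧ ∀ g : H,
      (A / l ^ 2) * ‖ContinuousLinearMap.adjoint T g‖ ^ 2 ≤
        ∑' i, ‖⟪g, f i⟫‖ ^ 2 ∧
      ∑' i, ‖⟪g, f i⟫‖ ^ 2 ≤ B * ‖g‖ ^ 2 :=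
  K_frame_range_inclusion_general K T f A B hA hKframe hrange
end

section
/- Let {f_i} be a K-frame for a Hilbert space H with bounds A, B, and let T be an invertible bounded linear operator on H with T K = K T. Then {T f_i} is a K-frame for H with bounds A ‖T^{-1}‖^{-2} and B ‖T‖². -/
open scoped ComplexInnerProductSpace

set_option maxHeartbeats 1000000 in
/-- If `{f_i}` is a `K`-frame with bounds `A, B` and `T` is an invertible
bounded operator commuting with `K`, then `{T f_i}` is a `K`-frame for `H` with bounds
`A ‖T⁻¹‖⁻²` and `B ‖T‖²`. -/
theorem K_frame_invertible_image
    {H : Type*} [NormedAddCommGroup H] [InnerProductSpace ℂ H] [CompleteSpace H]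
    (K T Tinv : H →L[ℂ] H)
    (hinv₁ : Tinv.comp T = ContinuousLinearMap.id ℂ H)
    (hinv₂ : T.comp Tinv = ContinuousLinearMap.id ℂ H)
    (hcomm : T.comp K = K.comp T)
    (f : ℕ → H) (A B : ℝ) (hA : 0 < A) (hAB : A ≤ B)
    (hKframe : ∀ g : H, A * ‖ContinuousLinearMap.adjoint K g‖ ^ 2 ≤
        ∑' i, ‖⟪g, f i⟫‖ ^ 2 ∧ ∑' i, ‖⟪g, f i⟫‖ ^ 2 ≤ B * ‖g‖ ^ 2) :
    ∀ g : H, (A / ‖Tinv‖ ^ 2) * ‖ContinuousLinearMap.adjoint K g‖ ^ 2 ≤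
        ∑' i, ‖⟪g, T (f i)⟫‖ ^ 2 ∧
      ∑' i, ‖⟪g, T (f i)⟫‖ ^ 2 ≤ B * ‖T‖ ^ 2 * ‖g‖ ^ 2 := by
  intro g
  have hsum : ∑' i, ‖⟪g, T (f i)⟫‖ ^ 2
      = ∑' i, ‖⟪ContinuousLinearMap.adjoint T g, f i⟫‖ ^ 2 := by
    congr 1; funext i
    rw [ContinuousLinearMap.adjoint_inner_left]
  obtain ⟨h1, h2⟩ := hKframe (ContinuousLinearMap.adjoint T g)
  -- commutation of adjoints
  have hcomm' : (ContinuousLinearMap.adjoint K).comp (ContinuousLinearMap.adjoint T)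
      = (ContinuousLinearMap.adjoint T).comp (ContinuousLinearMap.adjoint K) := by
    rw [← ContinuousLinearMap.adjoint_comp, ← ContinuousLinearMap.adjoint_comp, hcomm]
  -- Tinv* ∘ T* = id
  have hinv' : (ContinuousLinearMap.adjoint Tinv).comp (ContinuousLinearMap.adjoint T)
      = ContinuousLinearMap.id ℂ H := by
    rw [← ContinuousLinearMap.adjoint_comp, hinv₂, ContinuousLinearMap.adjoint_id]
  have hKg : ‖ContinuousLinearMap.adjoint K g‖
      ≤ ‖Tinv‖ * ‖ContinuousLinearMap.adjoint K (ContinuousLinearMap.adjoint T g)‖ := by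
    have h0 : ContinuousLinearMap.adjoint K g
        = ContinuousLinearMap.adjoint Tinv
            (ContinuousLinearMap.adjoint K (ContinuousLinearMap.adjoint T g)) := by
      have := congrArg (fun S : H →L[ℂ] H => S (ContinuousLinearMap.adjoint K g)) hinv'
      simp only [ContinuousLinearMap.comp_apply, ContinuousLinearMap.id_apply] at this
      conv_lhs => rw [← this]
      congr 1
      have := congrArg (fun S : H →L[ℂ] H => S g) hcomm'
      simpa using this.symm
    rw [h0]
    calc ‖ContinuousLinearMap.adjoint Tinv
          (ContinuousLinearMap.adjoint K (ContinuousLinearMap.adjoint T g))‖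
        ≤ ‖ContinuousLinearMap.adjoint Tinv‖ *
            ‖ContinuousLinearMap.adjoint K (ContinuousLinearMap.adjoint T g)‖ :=
          (ContinuousLinearMap.adjoint Tinv).le_opNorm _
      _ = _ := by rw [ContinuousLinearMap.adjoint.norm_map]
  constructor
  · rw [hsum]
    refine le_trans ?_ h1
    rcases eq_or_lt_of_le (norm_nonneg Tinv) with h | h
    · have hz : ‖ContinuousLinearMap.adjoint K g‖ = 0 := by
        have hn := norm_nonneg (ContinuousLinearMap.adjoint K g)
        have hn2 := norm_nonneg (ContinuousLinearMap.adjoint K (ContinuousLinearMap.adjoint T g))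
        nlinarith
      rw [hz]
      have h0 : A / ‖Tinv‖ ^ 2 * (0:ℝ) ^ 2 = 0 := by ring
      rw [h0]
      positivity
    · rw [div_mul_eq_mul_div, div_le_iff₀ (by positivity)]
      have hn := norm_nonneg (ContinuousLinearMap.adjoint K g)
      have hn2 := norm_nonneg (ContinuousLinearMap.adjoint K (ContinuousLinearMap.adjoint T g))
      have hm := mul_nonneg h.le hn2
      have hsq := mul_le_mul hKg hKg hn hm
      nlinarith [hA.le, hsq]
  · rw [hsum]
    refine le_trans h2 ?_
    have hTg : ‖ContinuousLinearMap.adjoint T g‖ ≤ ‖T‖ * ‖g‖ := by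
      calc ‖ContinuousLinearMap.adjoint T g‖
          ≤ ‖ContinuousLinearMap.adjoint T‖ * ‖g‖ :=
            (ContinuousLinearMap.adjoint T).le_opNorm g
        _ = ‖T‖ * ‖g‖ := by rw [ContinuousLinearMap.adjoint.norm_map]
    have hn : (0:ℝ) ≤ ‖ContinuousLinearMap.adjoint T g‖ := norm_nonneg _
    have hm := mul_nonneg (norm_nonneg T) (norm_nonneg g)
    have hB : (0:ℝ) < B := hA.trans_le hAB
    have hsq := mul_le_mul hTg hTg hn hm
    nlinarith [hB.le, hsq]
end

section
/- Let {f_i} be a K-frame for a Hilbert space H with bounds A, B, and let T be a bounded co-isometry on H (T T* = I) commuting with K (T K = K T). Then {T f_i} is a K-frame for H with bounds A and B ‖T‖². -/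
open scoped ComplexInnerProductSpace

/-- If `{f_i}` is a `K`-frame with bounds `A, B` and `T` is a co-isometry
(`T T* = I`) commuting with `K`, then `{T f_i}` is a `K`-frame with bounds `A`
and `B ‖T‖²`. -/
theorem K_frame_coisometry_image
    {H : Type*} [NormedAddCommGroup H] [InnerProductSpace ℂ H] [CompleteSpace H]
    (K T : H →L[ℂ] H)
    (hco : T.comp (ContinuousLinearMap.adjoint T) = ContinuousLinearMap.id ℂ H)
    (hcomm : T.comp K = K.comp T)
    (f : ℕ → H) (A B : ℝ) (hA : 0 < A) (hAB : A ≤ B)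
    (hKframe : ∀ g : H, A * ‖ContinuousLinearMap.adjoint K g‖ ^ 2 ≤
        ∑' i, ‖⟪g, f i⟫‖ ^ 2 ∧ ∑' i, ‖⟪g, f i⟫‖ ^ 2 ≤ B * ‖g‖ ^ 2) :
    ∀ g : H, A * ‖ContinuousLinearMap.adjoint K g‖ ^ 2 ≤
        ∑' i, ‖⟪g, T (f i)⟫‖ ^ 2 ∧
      ∑' i, ‖⟪g, T (f i)⟫‖ ^ 2 ≤ B * ‖T‖ ^ 2 * ‖g‖ ^ 2 := by
  intro g
  set Ts := ContinuousLinearMap.adjoint T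
  have hTiso : ∀ x : H, ‖Ts x‖ = ‖x‖ := by
    intro x
    have h := congrArg (fun S : H →L[ℂ] H => S x) hco
    simp only [ContinuousLinearMap.comp_apply, ContinuousLinearMap.id_apply] at h
    have heq : (⟪Ts x, Ts x⟫ : ℂ) = ⟪x, x⟫ := by
      rw [ContinuousLinearMap.adjoint_inner_left, h]
    rw [inner_self_eq_norm_sq_to_K (𝕜 := ℂ), inner_self_eq_norm_sq_to_K (𝕜 := ℂ)] at heq
    have h2 : ‖Ts x‖ ^ 2 = ‖x‖ ^ 2 := by exact_mod_cast heq
    nlinarith [norm_nonneg (Ts x), norm_nonneg x]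
  have hinner : ∀ i, ⟪g, T (f i)⟫ = ⟪Ts g, f i⟫ := fun i =>
    (ContinuousLinearMap.adjoint_inner_left T (f i) g).symm
  have hsum : (∑' i, ‖⟪g, T (f i)⟫‖ ^ 2) = ∑' i, ‖⟪Ts g, f i⟫‖ ^ 2 := by
    simp_rw [hinner]
  obtain ⟨hlo, hhi⟩ := hKframe (Ts g)
  constructor
  · rw [hsum]
    refine le_trans ?_ hlo
    have hadj : (ContinuousLinearMap.adjoint K).comp Ts =
        Ts.comp (ContinuousLinearMap.adjoint K) := by
      rw [← ContinuousLinearMap.adjoint_comp, ← ContinuousLinearMap.adjoint_comp, hcomm]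
    have h1 : ContinuousLinearMap.adjoint K (Ts g) =
        Ts (ContinuousLinearMap.adjoint K g) := by
      have := congrArg (fun S : H →L[ℂ] H => S g) hadj
      simpa using this
    rw [h1, hTiso]
  · rw [hsum]
    refine le_trans hhi ?_
    have hTsnorm : ‖Ts g‖ ≤ ‖T‖ * ‖g‖ := by
      calc ‖Ts g‖ ≤ ‖Ts‖ * ‖g‖ := Ts.le_opNorm g
        _ = ‖T‖ * ‖g‖ := by rw [show ‖Ts‖ = ‖T‖ from LinearIsometryEquiv.norm_map _ T]
    have hB : 0 ≤ B := le_trans hA.le hAB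
    have := mul_le_mul_of_nonneg_left (pow_le_pow_left₀ (norm_nonneg _) hTsnorm 2) hB
    calc B * ‖Ts g‖ ^ 2 ≤ B * (‖T‖ * ‖g‖) ^ 2 := this
      _ = B * ‖T‖ ^ 2 * ‖g‖ ^ 2 := by ring
end

section
/- Let {f_i} be a K₁-frame for a Hilbert space H with bounds A, B, and let K₂ be a bounded operator on H. Suppose there exist λ₁ ≥ 0 and 0 ≤ λ₂ < 1 such that ‖(K₁* − K₂*) f‖ ≤ λ₁ ‖K₁* f‖ + λ₂ ‖K₂* f‖ for all f ∈ H. Then {f_i} is a K₂-frame for H with bounds A((1−λ₂)/(1+λ₁))² and B. -/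
open scoped ComplexInnerProductSpace

/-- Perturbation stability: if `{f_i}` is a `K₁`-frame with bounds `A, B` and
`‖(K₁* − K₂*) f‖ ≤ λ₁‖K₁* f‖ + λ₂‖K₂* f‖` with `λ₂ < 1`, then `{f_i}` is a
`K₂`-frame with bounds `A((1−λ₂)/(1+λ₁))²` and `B`. -/
theorem K_frame_perturbation
    {H : Type*} [NormedAddCommGroup H] [InnerProductSpace ℂ H] [CompleteSpace H]
    (K₁ K₂ : H →L[ℂ] H) (f : ℕ → H) (A B : ℝ) (hA : 0 < A) (hAB : A ≤ B)
    (hK₁frame : ∀ g : H, A * ‖ContinuousLinearMap.adjoint K₁ g‖ ^ 2 ≤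
        ∑' i, ‖⟪g, f i⟫‖ ^ 2 ∧ ∑' i, ‖⟪g, f i⟫‖ ^ 2 ≤ B * ‖g‖ ^ 2)
    (l₁ l₂ : ℝ) (hl₁ : 0 ≤ l₁) (hl₂0 : 0 ≤ l₂) (hl₂ : l₂ < 1)
    (hpert : ∀ g : H,
      ‖ContinuousLinearMap.adjoint K₁ g - ContinuousLinearMap.adjoint K₂ g‖ ≤
        l₁ * ‖ContinuousLinearMap.adjoint K₁ g‖ +
        l₂ * ‖ContinuousLinearMap.adjoint K₂ g‖) :
    ∀ g : H, A * ((1 - l₂) / (1 + l₁)) ^ 2 *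
        ‖ContinuousLinearMap.adjoint K₂ g‖ ^ 2 ≤ ∑' i, ‖⟪g, f i⟫‖ ^ 2 ∧
      ∑' i, ‖⟪g, f i⟫‖ ^ 2 ≤ B * ‖g‖ ^ 2 := by
  intro g
  refine ⟨?_, (hK₁frame g).2⟩
  set x := ‖ContinuousLinearMap.adjoint K₁ g‖ with hx
  set y := ‖ContinuousLinearMap.adjoint K₂ g‖ with hy
  have hx0 : 0 ≤ x := norm_nonneg _
  have hy0 : 0 ≤ y := norm_nonneg _
  have htri : y ≤ ‖ContinuousLinearMap.adjoint K₁ g - ContinuousLinearMap.adjoint K₂ g‖ + x := by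
    have h := norm_sub_le (ContinuousLinearMap.adjoint K₁ g)
      (ContinuousLinearMap.adjoint K₁ g - ContinuousLinearMap.adjoint K₂ g)
    rw [sub_sub_cancel] at h
    linarith
  have hkey : (1 - l₂) * y ≤ (1 + l₁) * x := by
    have := hpert g
    nlinarith
  have h1 : (0:ℝ) < 1 + l₁ := by linarith
  have h2 : (0:ℝ) < 1 - l₂ := by linarith
  have hsq : ((1 - l₂) / (1 + l₁)) ^ 2 * y ^ 2 ≤ x ^ 2 := by
    have h3 : (1 - l₂) / (1 + l₁) * y ≤ x := by
      rw [div_mul_eq_mul_div, div_le_iff₀ h1]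
      nlinarith
    have h4 : 0 ≤ (1 - l₂) / (1 + l₁) * y := by positivity
    nlinarith
  calc A * ((1 - l₂) / (1 + l₁)) ^ 2 * y ^ 2 ≤ A * x ^ 2 := by nlinarith
    _ ≤ _ := (hK₁frame g).1
end
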